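/- arXiv:2203.10165 — 8 statements merged into one kernel-verified Lean document; each statement's English description precedes it below -/
import Mathlib

section
/- Let ε ∈ (0,1), δ ∈ (0,1), Δ > 0, and σ ≥ √(2·ln(1.25/δ))·Δ/ε. Let x, x' ∈ ℝ with |x − x'| ≤ Δ. Then the Gaussian measure N(x, σ²) assigns measure at most δ to the privacy-loss event {z ∈ ℝ : exp(−(z−x)²/(2σ²)) > exp(ε)·exp(−(z−x')²/(2σ²))}. -/
open MeasureTheory ProbabilityTheory

/-!
Write `z = x + σ w` with `w` standard normal and put `a = (x - x') / σ`. The privacy-loss event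
becomes `{w | ε - a² / 2 < a w}`, which by the symmetry of `N(0, 1)` has the probability of
`{w | ε - a² / 2 < |a| w}`. The calibration of `σ` gives `|a| C ≤ ε < 1` with
`C = √(2 log (1.25 / δ))`, so this event lies in the half-line `w > C - 1 / (2C)`.

Comparing the standard density with that of `N(s, 1)` on `(s, ∞)` gives
`P(w > s) ≤ exp (-s² / 2) / 2` for `s ≥ 0`. For `s = C - 1 / (2C)` we have `s² ≥ C² - 1`, so the
tail is at most `√e / 2 · exp (-C² / 2) ≤ 1.25 exp (-C² / 2) = δ`. When `s < 0`, `C² < 1 / 2` and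
`1.25 exp (-C² / 2) > 15 / 16`, while the density bound `φ ≤ 1 / √(2π)` on `(s, 0]` keeps the
tail below `3 / 4`.
-/

open Real Set NNReal

namespace ProbabilityTheory

variable {μ : ℝ} {v : ℝ≥0}

lemma gaussianReal_Ioi_self (hv : v ≠ 0) : gaussianReal μ v (Ioi μ) = 2⁻¹ := by
  have := nullSingletonClass_gaussianReal (μ := μ) hv
  have hrefl : (gaussianReal μ v).map (2 * μ - ·) = gaussianReal μ v := by
    rw [gaussianReal_map_const_sub]
    ring_nf
  have hsymm : gaussianReal μ v (Iic μ) = gaussianReal μ v (Ioi μ) := by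
    conv_lhs => rw [measure_congr Iio_ae_eq_Iic.symm, ← hrefl]
    rw [Measure.map_apply (by fun_prop) measurableSet_Iio]
    congr 1
    ext z
    simp only [mem_preimage, mem_Iio, mem_Ioi]
    constructor <;> intro <;> linarith
  have htotal : gaussianReal μ v (Ioi μ) * 2 = 1 := by
    rw [mul_two]
    nth_rewrite 1 [← hsymm]
    rw [← measure_union (Iic_disjoint_Ioi le_rfl) measurableSet_Ioi, Iic_union_Ioi, measure_univ]
  exact ENNReal.eq_inv_of_mul_eq_one_left htotal

lemma gaussianPDFReal_le (x : ℝ) :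
    gaussianPDFReal μ v x ≤ (√(2 * π * v))⁻¹ := by
  rw [gaussianPDFReal]
  refine mul_le_of_le_one_right (by positivity) (exp_le_one_iff.2 ?_)
  exact div_nonpos_of_nonpos_of_nonneg (neg_nonpos.2 (sq_nonneg _)) (by positivity)

lemma gaussianReal_Ioc_le (hv : v ≠ 0) (a b : ℝ) :
    gaussianReal μ v (Ioc a b) ≤ ENNReal.ofReal ((b - a) / √(2 * π * v)) :=
  calc gaussianReal μ v (Ioc a b) = ∫⁻ z in Ioc a b, gaussianPDF μ v z :=
        gaussianReal_apply μ hv _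
    _ ≤ ∫⁻ _ in Ioc a b, ENNReal.ofReal (√(2 * π * v))⁻¹ :=
        setLIntegral_mono measurable_const fun z _ =>
          ENNReal.ofReal_le_ofReal (gaussianPDFReal_le z)
    _ = ENNReal.ofReal ((b - a) / √(2 * π * v)) := by
        rw [setLIntegral_const, Real.volume_Ioc, ← ENNReal.ofReal_mul (by positivity),
          div_eq_inv_mul]

lemma gaussianReal_map_const_add_mul (m σ : ℝ) :
    (gaussianReal 0 1).map (fun w ↦ m + σ * w) = gaussianReal m (σ ^ 2).toNNReal := by
  have hcomp : (fun w ↦ m + σ * w) = (m + ·) ∘ (σ * ·) := rfl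
  rw [hcomp, ← Measure.map_map (by fun_prop) (by fun_prop), gaussianReal_map_const_mul,
    gaussianReal_map_const_add]
  congr 1
  · ring
  · ext
    simp [sq_nonneg]

lemma gaussianReal_setOf_lt_mul_eq_abs (c a : ℝ) :
    gaussianReal 0 v {w | c < a * w} = gaussianReal 0 v {w | c < |a| * w} := by
  rcases le_or_gt 0 a with ha | ha
  · rw [abs_of_nonneg ha]
  have hneg : (gaussianReal 0 v).map (fun w ↦ -w) = gaussianReal 0 v := by
    rw [gaussianReal_map_neg, neg_zero]
  conv_rhs => rw [← hneg]
  rw [Measure.map_apply measurable_neg (measurableSet_lt measurable_const (by fun_prop)),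
    abs_of_neg ha]
  congr 1
  ext w
  simp only [mem_preimage, mem_ofPred_eq, neg_mul_neg]

lemma gaussianPDFReal_le_exp_mul_gaussianPDFReal {s z : ℝ} (hs : 0 ≤ s) (hz : s ≤ z) :
    gaussianPDFReal 0 1 z ≤ exp (-s ^ 2 / 2) * gaussianPDFReal s 1 z := by
  simp only [gaussianPDFReal, NNReal.coe_one, mul_one, sub_zero]
  rw [mul_left_comm, ← exp_add]
  gcongr
  nlinarith [mul_nonneg hs (sub_nonneg.2 hz)]

lemma gaussianReal_Ioi_le_exp {s : ℝ} (hs : 0 ≤ s) :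
    gaussianReal 0 1 (Ioi s) ≤ ENNReal.ofReal (exp (-s ^ 2 / 2) / 2) :=
  calc gaussianReal 0 1 (Ioi s) = ∫⁻ z in Ioi s, gaussianPDF 0 1 z :=
        gaussianReal_apply 0 one_ne_zero _
    _ ≤ ∫⁻ z in Ioi s, ENNReal.ofReal (exp (-s ^ 2 / 2)) * gaussianPDF s 1 z := by
        refine setLIntegral_mono ((measurable_gaussianPDF _ _).const_mul _) fun z hz ↦ ?_
        rw [gaussianPDF, gaussianPDF, ← ENNReal.ofReal_mul (exp_nonneg _)]
        exact ENNReal.ofReal_le_ofReal (gaussianPDFReal_le_exp_mul_gaussianPDFReal hs hz.le)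
    _ = ENNReal.ofReal (exp (-s ^ 2 / 2)) * gaussianReal s 1 (Ioi s) := by
        rw [lintegral_const_mul _ (measurable_gaussianPDF _ _), gaussianReal_apply _ one_ne_zero]
    _ = ENNReal.ofReal (exp (-s ^ 2 / 2) / 2) := by
        rw [gaussianReal_Ioi_self one_ne_zero, ENNReal.ofReal_div_of_pos two_pos,
          ENNReal.ofReal_ofNat]
        exact (div_eq_mul_inv _ _).symm

lemma gaussianReal_Ioi_le_of_nonpos {s : ℝ} (hs : s ≤ 0) :
    gaussianReal 0 1 (Ioi s) ≤ ENNReal.ofReal (1 / 2 - s / √(2 * π)) :=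
  calc gaussianReal 0 1 (Ioi s) ≤ gaussianReal 0 1 (Ioc s 0 ∪ Ioi 0) := by
        rw [Ioc_union_Ioi_eq_Ioi hs]
    _ ≤ gaussianReal 0 1 (Ioc s 0) + gaussianReal 0 1 (Ioi 0) := measure_union_le _ _
    _ ≤ ENNReal.ofReal ((0 - s) / √(2 * π * (1 : ℝ≥0))) + ENNReal.ofReal (1 / 2) := by
        gcongr
        · exact gaussianReal_Ioc_le one_ne_zero s 0
        · rw [gaussianReal_Ioi_self one_ne_zero, one_div, ENNReal.ofReal_inv_of_pos two_pos,
            ENNReal.ofReal_ofNat]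
    _ = ENNReal.ofReal (1 / 2 - s / √(2 * π)) := by
        rw [← ENNReal.ofReal_add (div_nonneg (by linarith) (sqrt_nonneg _)) (by norm_num)]
        congr 1
        simp only [NNReal.coe_one, mul_one]
        ring

lemma gaussianReal_Ioi_sub_inv_le {C : ℝ} (hC : 1 / 2 ≤ C) :
    gaussianReal 0 1 (Ioi (C - (2 * C)⁻¹)) ≤ ENNReal.ofReal (5 / 4 * exp (-C ^ 2 / 2)) := by
  have hC0 : 0 < C := by linarith
  rcases le_or_gt 0 (C - (2 * C)⁻¹) with hs | hs
  · refine (gaussianReal_Ioi_le_exp hs).trans (ENNReal.ofReal_le_ofReal ?_)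
    have hsq : C ^ 2 - 1 ≤ (C - (2 * C)⁻¹) ^ 2 := by
      have hexpand : (C - (2 * C)⁻¹) ^ 2 = C ^ 2 - 1 + ((2 * C)⁻¹) ^ 2 := by
        field_simp
        ring
      nlinarith
    have hsqrt_e : exp (1 / 2) ≤ 2 := by
      have := exp_bound_div_one_sub_of_interval (x := 1 / 2) (by norm_num) (by norm_num)
      norm_num at this ⊢
      linarith
    calc exp (-(C - (2 * C)⁻¹) ^ 2 / 2) / 2 ≤ exp (1 / 2 + -C ^ 2 / 2) / 2 := by
          gcongr
          linarith
      _ ≤ 5 / 4 * exp (-C ^ 2 / 2) := by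
          rw [exp_add]
          nlinarith [exp_pos (-C ^ 2 / 2)]
  · refine (gaussianReal_Ioi_le_of_nonpos hs.le).trans (ENNReal.ofReal_le_ofReal ?_)
    have hC_sq : C ^ 2 < 1 / 2 := by
      have := mul_lt_mul_of_pos_left (sub_neg.1 hs) (mul_pos two_pos hC0)
      rw [mul_inv_cancel₀ (by positivity)] at this
      nlinarith
    have hs_ge : -(1 / 2) ≤ C - (2 * C)⁻¹ := by
      have : (2 * C)⁻¹ ≤ 1 := inv_le_one_of_one_le₀ (by linarith)
      linarith
    have hsqrt_two_pi : 2 ≤ √(2 * π) := by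
      rw [le_sqrt (by norm_num) (by positivity)]
      nlinarith [pi_gt_three]
    have hdensity : -(C - (2 * C)⁻¹) / √(2 * π) ≤ 1 / 4 := by
      rw [div_le_iff₀ (by positivity)]
      nlinarith
    have hexp : 3 / 4 ≤ exp (-C ^ 2 / 2) := by
      linarith [add_one_le_exp (-C ^ 2 / 2)]
    rw [sub_eq_add_neg, ← neg_div]
    linarith

lemma one_half_le_sqrt_two_mul_log {δ : ℝ} (hδ0 : 0 < δ) (hδ1 : δ < 1) :
    1 / 2 ≤ √(2 * log (1.25 / δ)) := by
  have hlog : 1 / 5 ≤ log (1.25 / δ) := by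
    have := one_sub_inv_le_log_of_pos (x := 1.25 / δ) (by positivity)
    rw [inv_div] at this
    linarith [div_le_div_of_nonneg_right hδ1.le (by norm_num : (0 : ℝ) ≤ 1.25)]
  rw [le_sqrt (by norm_num) (by linarith)]
  linarith

lemma gaussianReal_Ioi_sqrt_two_mul_log_le {δ : ℝ} (hδ0 : 0 < δ) (hδ1 : δ < 1) :
    gaussianReal 0 1 (Ioi (√(2 * log (1.25 / δ)) - (2 * √(2 * log (1.25 / δ)))⁻¹)) ≤
      ENNReal.ofReal δ := by
  have hC := one_half_le_sqrt_two_mul_log hδ0 hδ1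
  have hδC : 5 / 4 * exp (-√(2 * log (1.25 / δ)) ^ 2 / 2) = δ := by
    rw [sq_sqrt (sqrt_pos.1 (by linarith)).le, neg_div,
      mul_div_cancel_left₀ _ two_ne_zero, exp_neg, exp_log (by positivity), inv_div,
      show (1.25 : ℝ) = 5 / 4 by norm_num]
    field_simp
  simpa only [hδC] using gaussianReal_Ioi_sub_inv_le hC

lemma gaussianReal_privacy_loss_event {σ : ℝ} (hσ : σ ≠ 0) (ε x x' : ℝ) :
    gaussianReal x (σ ^ 2).toNNReal
      {z | exp ε * exp (-(z - x') ^ 2 / (2 * σ ^ 2)) < exp (-(z - x) ^ 2 / (2 * σ ^ 2))} =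
      gaussianReal 0 1 {w | ε - ((x - x') / σ) ^ 2 / 2 < |(x - x') / σ| * w} := by
  rw [← gaussianReal_map_const_add_mul, Measure.map_apply (by fun_prop)
    (measurableSet_lt (by fun_prop) (by fun_prop)), ← gaussianReal_setOf_lt_mul_eq_abs]
  congr 1
  ext w
  have hloss : -(x + σ * w - x) ^ 2 / (2 * σ ^ 2) - -(x + σ * w - x') ^ 2 / (2 * σ ^ 2) =
      (x - x') / σ * w + ((x - x') / σ) ^ 2 / 2 := by
    field_simp
    ring
  simp only [mem_preimage, mem_ofPred_eq, ← exp_add, exp_lt_exp]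
  constructor <;> intro <;> linarith

end ProbabilityTheory

lemma setOf_lt_abs_mul_subset_Ioi {a C ε : ℝ} (hC : 0 < C) (ha : |a| * C ≤ ε) (hε : ε ≤ 1) :
    {w | ε - a ^ 2 / 2 < |a| * w} ⊆ Ioi (C - (2 * C)⁻¹) := by
  intro w (hw : ε - a ^ 2 / 2 < |a| * w)
  by_contra hle
  have hsq : a ^ 2 / 2 ≤ |a| * (2 * C)⁻¹ := by
    rw [← sq_abs, le_mul_inv_iff₀ (by positivity)]
    nlinarith [abs_nonneg a]
  nlinarith [mul_le_mul_of_nonneg_left (not_lt.1 hle) (abs_nonneg a)]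

/-- Tail estimate for the Gaussian mechanism: under `N(x, σ²)`, the event on which the ratio
of the Gaussian densities centered at `x` and `x'` exceeds `exp ε` has probability at most `δ`. -/
theorem gaussian_privacy_loss_tail
    (ε δ Δ σ : ℝ)
    (hε : ε ∈ Set.Ioo (0 : ℝ) 1) (hδ : δ ∈ Set.Ioo (0 : ℝ) 1) (hΔ : 0 < Δ)
    (hσ : Real.sqrt (2 * Real.log (1.25 / δ)) * Δ / ε ≤ σ)
    (x x' : ℝ) (hx : |x - x'| ≤ Δ) :
    gaussianReal x ((σ ^ 2).toNNReal)
      {z : ℝ | Real.exp ε * Real.exp (-(z - x') ^ 2 / (2 * σ ^ 2)) <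
        Real.exp (-(z - x) ^ 2 / (2 * σ ^ 2))} ≤ ENNReal.ofReal δ := by
  obtain ⟨hε0, hε1⟩ := hε
  obtain ⟨hδ0, hδ1⟩ := hδ
  set C := √(2 * log (1.25 / δ))
  have hC : 1 / 2 ≤ C := one_half_le_sqrt_two_mul_log hδ0 hδ1
  have hσ0 : 0 < σ := lt_of_lt_of_le (by positivity) hσ
  have ha : |(x - x') / σ| * C ≤ ε := by
    rw [div_le_iff₀ hε0] at hσ
    rw [abs_div, abs_of_pos hσ0, div_mul_eq_mul_div, div_le_iff₀ hσ0]
    nlinarith [mul_le_mul_of_nonneg_right hx (by linarith : (0 : ℝ) ≤ C)]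
  rw [gaussianReal_privacy_loss_event hσ0.ne']
  exact (measure_mono (setOf_lt_abs_mul_subset_Ioi (by linarith) ha hε1.le)).trans
    (gaussianReal_Ioi_sqrt_two_mul_log_le hδ0 hδ1)
end

section
/- Let β > 0, let m ≥ 1, and let t : Fin m → ℝ be injective (pairwise distinct points). Then the m × m real matrix A with entries A i j = exp(−β·|t i − t j|) is positive definite. -/
/-!
Since `exp (-β * |x - y|) = exp (-β * x) * min (exp (2 * β * x)) (exp (2 * β * y)) * exp (-β * y)`
for `β ≥ 0`, the Laplace Gram matrix is a congruence, by a positive diagonal matrix, of the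
Brownian covariance matrix `min (u i) (u j)` at the distinct positive points `u i = exp (2 * β * t i)`.
After sorting the points, that matrix factors as `L * diagonal d * Lᵀ`, where `L` is the
lower-triangular all-ones matrix (determinant `1`) and `d k = u k - u (k - 1) > 0` are the increments.
-/

open Real Matrix Finset

lemma det_of_ite_le {ι R : Type*} [Fintype ι] [LinearOrder ι] [CommRing R] :
    (of fun i k : ι => if k ≤ i then (1 : R) else 0).det = 1 := by
  rw [det_of_isLowerTriangular _ fun i k hik => ?_]
  · simp
  · simp [not_le.2 (show i < k from hik)]

section MinKernel

variable {m : ℕ}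

-- `vecCons 0 u k.castSucc` is `u (k - 1)`, read as `0` for `k = 0`.
lemma of_min_eq_mul_diagonal_mul_transpose {u : Fin m → ℝ} (hu : Monotone u) :
    (of fun i j => min (u i) (u j)) =
      (of fun i k : Fin m => if k ≤ i then (1 : ℝ) else 0) *
        diagonal (fun k => vecCons 0 u k.succ - vecCons 0 u k.castSucc) *
        (of fun i k : Fin m => if k ≤ i then (1 : ℝ) else 0)ᵀ := by
  ext i j
  symm
  calc _ = ∑ k ∈ Iic (min i j), (vecCons 0 u k.succ - vecCons 0 u k.castSucc) := by
        rw [mul_apply, ← sum_subset (subset_univ (Iic (min i j)))]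
        · exact sum_congr rfl fun k hk => by simp_all
        · intro k _ hk
          rw [mem_Iic, le_min_iff, not_and_or] at hk
          rcases hk with hk | hk <;> simp [hk]
    _ = u (min i j) := by rw [Fin.sum_Iic_sub]; simp
    _ = min (u i) (u j) := hu.map_min

theorem posDef_min_of_strictMono {u : Fin m → ℝ} (hu : StrictMono u) (hpos : ∀ i, 0 < u i) :
    (of fun i j => min (u i) (u j)).PosDef := by
  have hcons : StrictMono (vecCons 0 u) := Fin.strictMono_cons.2 ⟨hpos, hu⟩
  have hd : (diagonal fun k : Fin m => vecCons 0 u k.succ - vecCons 0 u k.castSucc).PosDef :=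
    PosDef.diagonal fun k => sub_pos.2 (Fin.strictMono_iff_lt_succ.1 hcons k)
  rw [of_min_eq_mul_diagonal_mul_transpose hu.monotone, ← conjTranspose_eq_transpose_of_trivial]
  refine hd.mul_mul_conjTranspose_same ?_
  rw [vecMul_injective_iff_isUnit, isUnit_iff_isUnit_det, det_of_ite_le]
  exact isUnit_one

theorem posDef_min_of_injective {u : Fin m → ℝ} (hu : Function.Injective u)
    (hpos : ∀ i, 0 < u i) : (of fun i j => min (u i) (u j)).PosDef := by
  set σ := Tuple.sort u
  have hsorted : StrictMono (u ∘ σ) :=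
    (Tuple.monotone_sort u).strictMono_of_injective (hu.comp σ.injective)
  convert (posDef_min_of_strictMono hsorted fun i => hpos _).submatrix σ.symm.injective using 1
  ext i j
  simp

end MinKernel

lemma exp_neg_mul_abs_sub {β : ℝ} (hβ : 0 ≤ β) (x y : ℝ) :
    exp (-β * |x - y|) =
      exp (-β * x) * min (exp (2 * β * x)) (exp (2 * β * y)) * exp (-β * y) := by
  rw [← exp_monotone.map_min, ← exp_add, ← exp_add, ← mul_min_of_nonneg _ _ (by positivity)]
  congr 1
  rcases le_total x y with h | h
  · rw [min_eq_left h, abs_of_nonpos (sub_nonpos.2 h)]; ring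
  · rw [min_eq_right h, abs_of_nonneg (sub_nonneg.2 h)]; ring

theorem laplaceKernel_gram_posDef_general (β : ℝ) (hβ : 0 < β) (m : ℕ)
    (t : Fin m → ℝ) (ht : Function.Injective t) :
    (Matrix.of fun i j : Fin m => Real.exp (-β * |t i - t j|)).PosDef := by
  set D := diagonal fun i => exp (-β * t i)
  have hD : Function.Injective D.mulVec := by
    rw [mulVec_injective_iff_isUnit, isUnit_iff_isUnit_det, det_diagonal]
    exact (prod_pos fun i _ => exp_pos _).ne'.isUnit
  have hmin : (of fun i j => min (exp (2 * β * t i)) (exp (2 * β * t j))).PosDef :=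
    posDef_min_of_injective (exp_injective.comp ((mul_right_injective₀ (by positivity)).comp ht))
      fun i => exp_pos _
  convert hmin.conjTranspose_mul_mul_same hD using 1
  ext i j
  rw [of_apply, exp_neg_mul_abs_sub hβ.le]
  simp [D]

/-- The Gram matrix of the Laplace kernel `K(x,y) = exp (-β * |x - y|)` at pairwise distinct
points is positive definite. -/
theorem laplaceKernel_gram_posDef (β : ℝ) (hβ : 0 < β) (m : ℕ) (hm : 1 ≤ m)
    (t : Fin m → ℝ) (ht : Function.Injective t) :
    (Matrix.of fun i j : Fin m => Real.exp (-β * |t i - t j|)).PosDef :=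
  laplaceKernel_gram_posDef_general β hβ m t ht
end

section
/- Let q ∈ ℝ and n ≥ 0. The (n+1) × (n+1) real matrix A with entries A i j = q^{|i−j|} (indices i, j ∈ {0,…,n}) has determinant det A = (1 − q²)ⁿ. -/
/-
Subtracting `q` times the second row from the first turns the first row into
`(1 - q², 0, …, 0)`, and deleting the first row and column of the Kac–Murdock–Szegő matrix
`(q ^ |i - j|)` leaves the same matrix one size smaller; expanding along the first row gives
the recursion `det Aₙ₊₁ = (1 - q²) det Aₙ`.
-/

namespace Matrix

variable {R : Type*} [CommRing R]

theorem det_updateRow_zero_single_zero {n : ℕ} (A : Matrix (Fin (n + 1)) (Fin (n + 1)) R)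
    (c : R) : (A.updateRow 0 (Pi.single 0 c)).det = c * (A.submatrix Fin.succ Fin.succ).det := by
  rw [det_succ_row_zero, Fintype.sum_eq_single 0 fun j hj => by simp [hj], updateRow_self,
    Pi.single_eq_same, ← Fin.succAbove_zero, submatrix_updateRow_succAbove]
  simp

def kacMurdockSzego (q : R) (n : ℕ) : Matrix (Fin n) (Fin n) R :=
  of fun i j => q ^ ((i : ℤ) - (j : ℤ)).natAbs

theorem kacMurdockSzego_submatrix_succ (q : R) (n : ℕ) :
    (kacMurdockSzego q (n + 1)).submatrix Fin.succ Fin.succ = kacMurdockSzego q n := by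
  ext i j
  simp [kacMurdockSzego]

theorem kacMurdockSzego_row_zero_add_neg_smul_row_one (q : R) (n : ℕ) :
    kacMurdockSzego q (n + 2) 0 + (-q) • kacMurdockSzego q (n + 2) 1 = Pi.single 0 (1 - q ^ 2) := by
  ext j
  cases j using Fin.cases with
  | zero => simp [kacMurdockSzego, sq, sub_eq_add_neg]
  | succ k =>
    have hk : (-1 + -(k : ℤ)).natAbs = k + 1 := by omega
    simp [kacMurdockSzego, hk, pow_succ']

theorem det_kacMurdockSzego_succ (q : R) (n : ℕ) :
    (kacMurdockSzego q (n + 1)).det = (1 - q ^ 2) ^ n := by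
  induction n with
  | zero => simp [kacMurdockSzego]
  | succ n ih =>
    rw [← det_updateRow_add_smul_self _ Fin.zero_ne_one (-q),
      kacMurdockSzego_row_zero_add_neg_smul_row_one, det_updateRow_zero_single_zero,
      kacMurdockSzego_submatrix_succ, ih, pow_succ' (1 - q ^ 2)]

end Matrix

/-- The `(n+1) × (n+1)` matrix with entries `q ^ |i - j|` has determinant `(1 - q²)ⁿ`. -/
theorem det_pow_abs_sub (q : ℝ) (n : ℕ) :
    (Matrix.of fun i j : Fin (n + 1) => q ^ ((i : ℤ) - (j : ℤ)).natAbs).det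
      = (1 - q ^ 2) ^ n :=
  Matrix.det_kacMurdockSzego_succ q n
end

section
/- Let q ∈ ℝ and n ≥ 1. Define K₀₀ ∈ ℝ^{(n+1)×(n+1)} by (K₀₀) j j' = q^{2|j−j'|} (j, j' ∈ {0,…,n}), K₁₀ ∈ ℝ^{n×(n+1)} by (K₁₀) i j = q^{|2i+1−2j|} (i ∈ {0,…,n−1}, j ∈ {0,…,n}), and M ∈ ℝ^{n×(n+1)} by M i j = 1 if j = i or j = i+1 and M i j = 0 otherwise. Then K₁₀ = (q/(1+q²)) · (M · K₀₀); equivalently, when K₀₀ is invertible, K₁₀ · K₀₀⁻¹ = (q/(1+q²)) · M. -/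
/-- Covariance block of the exponential kernel over even-index points: `(K₀₀) j j' = q^{2|j-j'|}`. -/
def K00 (q : ℝ) (n : ℕ) : Matrix (Fin (n + 1)) (Fin (n + 1)) ℝ :=
  Matrix.of fun j j' => q ^ (2 * ((j : ℤ) - (j' : ℤ)).natAbs)

/-- Cross covariance block: `(K₁₀) i j = q^{|2i+1-2j|}`. -/
def K10 (q : ℝ) (n : ℕ) : Matrix (Fin n) (Fin (n + 1)) ℝ :=
  Matrix.of fun i j => q ^ (2 * (i : ℤ) + 1 - 2 * (j : ℤ)).natAbs

/-- Bidiagonal 0–1 matrix with ones in positions `(i, i)` and `(i, i+1)`. -/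
def Mbid (n : ℕ) : Matrix (Fin n) (Fin (n + 1)) ℝ :=
  Matrix.of fun i j => if (j : ℕ) = (i : ℕ) ∨ (j : ℕ) = (i : ℕ) + 1 then 1 else 0

/-- The conditional-mean coefficient matrix of the Gaussian process mechanism:
`K₁₀ = (q/(1+q²)) · (M · K₀₀)`; equivalently, when `K₀₀` is invertible,
`K₁₀ · K₀₀⁻¹ = (q/(1+q²)) · M`. -/
theorem gp_conditional_mean_matrix (q : ℝ) (n : ℕ) (hn : 1 ≤ n) :
    K10 q n = (q / (1 + q ^ 2)) • (Mbid n * K00 q n) ∧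
      (IsUnit (K00 q n).det →
        K10 q n * (K00 q n)⁻¹ = (q / (1 + q ^ 2)) • Mbid n) := by
  have hq : (1 : ℝ) + q ^ 2 ≠ 0 := by positivity
  have key : K10 q n = (q / (1 + q ^ 2)) • (Mbid n * K00 q n) := by
    ext i j
    have hM : ∀ j' : Fin (n + 1), Mbid n i j'
        = (if j' = i.castSucc then (1 : ℝ) else 0) + (if j' = i.succ then 1 else 0) := by
      intro j'
      simp only [Mbid, Matrix.of_apply, Fin.ext_iff, Fin.coe_castSucc, Fin.val_succ]
      by_cases h1 : (j' : ℕ) = (i : ℕ)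
      · have h2 : (j' : ℕ) ≠ (i : ℕ) + 1 := by omega
        simp [h1, h2]
      · by_cases h2 : (j' : ℕ) = (i : ℕ) + 1 <;> simp [h1, h2]
    have hsum : (Mbid n * K00 q n) i j = K00 q n i.castSucc j + K00 q n i.succ j := by
      simp [Matrix.mul_apply, hM, add_mul, ite_mul, Finset.sum_add_distrib,
        Finset.sum_ite_eq']
    rw [Matrix.smul_apply, hsum]
    simp only [K10, K00, Matrix.of_apply, smul_eq_mul, Fin.coe_castSucc, Fin.val_succ]
    rcases le_or_gt (j : ℕ) (i : ℕ) with hb | hb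
    · obtain ⟨d, hd⟩ : ∃ d, (i : ℕ) = (j : ℕ) + d := ⟨(i : ℕ) - (j : ℕ), by omega⟩
      have e1 : (2 * (i : ℤ) + 1 - 2 * (j : ℤ)).natAbs = 2 * d + 1 := by omega
      have e2 : (((i : ℕ) : ℤ) - (j : ℤ)).natAbs = d := by omega
      have e3 : ((((i : ℕ) + 1 : ℕ) : ℤ) - (j : ℤ)).natAbs = d + 1 := by push_cast; omega
      rw [e1, e2, e3]
      field_simp
      ring
    · obtain ⟨e, he⟩ : ∃ e, (j : ℕ) = (i : ℕ) + 1 + e := ⟨(j : ℕ) - (i : ℕ) - 1, by omega⟩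
      have e1 : (2 * (i : ℤ) + 1 - 2 * (j : ℤ)).natAbs = 2 * e + 1 := by omega
      have e2 : (((i : ℕ) : ℤ) - (j : ℤ)).natAbs = e + 1 := by omega
      have e3 : ((((i : ℕ) + 1 : ℕ) : ℤ) - (j : ℤ)).natAbs = e := by push_cast; omega
      rw [e1, e2, e3]
      field_simp
      ring
  refine ⟨key, fun hdet => ?_⟩
  rw [key, Matrix.smul_mul, Matrix.mul_assoc, Matrix.mul_nonsing_inv _ hdet, Matrix.mul_one]
end

section
/- Let q ∈ ℝ and n ≥ 1. Define K₁₁ ∈ ℝ^{n×n} by (K₁₁) i i' = q^{2|i−i'|}, K₁₀ ∈ ℝ^{n×(n+1)} by (K₁₀) i j = q^{|2i+1−2j|}, and M ∈ ℝ^{n×(n+1)} by M i j = 1 if j = i or j = i+1 and M i j = 0 otherwise. Then K₁₁ − (q/(1+q²)) · (M · K₁₀ᵀ) = ((1−q²)/(1+q²)) · I; equivalently, when K₀₀ (with (K₀₀) j j' = q^{2|j−j'|}) is invertible, the Schur complement satisfies K₁₁ − K₁₀K₀₀⁻¹K₁₀ᵀ = ((1−q²)/(1+q²)) · I. -/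
/-- Covariance block over odd-index points: `(K₁₁) i i' = q^{2|i-i'|}`. -/
def K11 (q : ℝ) (n : ℕ) : Matrix (Fin n) (Fin n) ℝ :=
  Matrix.of fun i i' => q ^ (2 * ((i : ℤ) - (i' : ℤ)).natAbs)

lemma sum_bid (n : ℕ) (i : Fin n) (f : Fin (n + 1) → ℝ) :
    ∑ j, Mbid n i j * f j = f i.castSucc + f i.succ := by
  have hne : (i.castSucc : Fin (n + 1)) ≠ i.succ := by
    simp [Fin.ext_iff]
  have h : ∀ j : Fin (n + 1), Mbid n i j * f j =
      (if j = i.castSucc then f j else 0) + (if j = i.succ then f j else 0) := by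
    intro j
    have c1 : ((j : ℕ) = (i : ℕ)) ↔ j = i.castSucc := by simp [Fin.ext_iff]
    have c2 : ((j : ℕ) = (i : ℕ) + 1) ↔ j = i.succ := by simp [Fin.ext_iff]
    simp only [Mbid, Matrix.of_apply, c1, c2]
    by_cases h1 : j = i.castSucc <;> by_cases h2 : j = i.succ <;> simp_all
  simp_rw [h]
  rw [Finset.sum_add_distrib, Finset.sum_ite_eq', Finset.sum_ite_eq']
  simp

lemma part1 (q : ℝ) (n : ℕ) :
    K11 q n - (q / (1 + q ^ 2)) • (Mbid n * (K10 q n).transpose)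
      = ((1 - q ^ 2) / (1 + q ^ 2)) • (1 : Matrix (Fin n) (Fin n) ℝ) := by
  have hq : (1 : ℝ) + q ^ 2 ≠ 0 := by positivity
  ext i i'
  simp only [Matrix.sub_apply, Matrix.smul_apply, Matrix.mul_apply, Matrix.transpose_apply,
    Matrix.one_apply, smul_eq_mul]
  rw [sum_bid]
  simp only [K11, K10, Matrix.of_apply, Fin.coe_castSucc, Fin.val_succ]
  rcases lt_trichotomy (i : ℕ) (i' : ℕ) with h | h | h
  · obtain ⟨k, hk⟩ : ∃ k, (i' : ℕ) = (i : ℕ) + k + 1 := ⟨(i' : ℕ) - (i : ℕ) - 1, by omega⟩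
    have hii' : i ≠ i' := by intro e; rw [e] at h; exact lt_irrefl _ h
    have e1 : 2 * ((i : ℤ) - (i' : ℤ)).natAbs = 2 * k + 2 := by omega
    have e2 : (2 * (i' : ℤ) + 1 - 2 * ((i : ℕ) : ℤ)).natAbs = 2 * k + 3 := by omega
    have e3 : (2 * (i' : ℤ) + 1 - 2 * (((i : ℕ) + 1 : ℕ) : ℤ)).natAbs = 2 * k + 1 := by omega
    rw [e1, e2, e3, if_neg hii']
    field_simp
    ring
  · have hii' : i = i' := Fin.ext h
    have e1 : 2 * ((i : ℤ) - (i' : ℤ)).natAbs = 0 := by omega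
    have e2 : (2 * (i' : ℤ) + 1 - 2 * ((i : ℕ) : ℤ)).natAbs = 1 := by omega
    have e3 : (2 * (i' : ℤ) + 1 - 2 * (((i : ℕ) + 1 : ℕ) : ℤ)).natAbs = 1 := by omega
    rw [e1, e2, e3, if_pos hii']
    field_simp
    ring
  · obtain ⟨k, hk⟩ : ∃ k, (i : ℕ) = (i' : ℕ) + k + 1 := ⟨(i : ℕ) - (i' : ℕ) - 1, by omega⟩
    have hii' : i ≠ i' := by intro e; rw [e] at h; exact lt_irrefl _ h
    have e1 : 2 * ((i : ℤ) - (i' : ℤ)).natAbs = 2 * k + 2 := by omega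
    have e2 : (2 * (i' : ℤ) + 1 - 2 * ((i : ℕ) : ℤ)).natAbs = 2 * k + 1 := by omega
    have e3 : (2 * (i' : ℤ) + 1 - 2 * (((i : ℕ) + 1 : ℕ) : ℤ)).natAbs = 2 * k + 3 := by omega
    rw [e1, e2, e3, if_neg hii']
    field_simp
    ring

lemma K10_eq (q : ℝ) (n : ℕ) :
    K10 q n = (q / (1 + q ^ 2)) • (Mbid n * K00 q n) := by
  have hq : (1 : ℝ) + q ^ 2 ≠ 0 := by positivity
  ext i j
  simp only [Matrix.smul_apply, Matrix.mul_apply, smul_eq_mul]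
  rw [sum_bid]
  simp only [K10, K00, Matrix.of_apply, Fin.coe_castSucc, Fin.val_succ]
  rcases le_or_gt ((j : ℕ)) ((i : ℕ)) with h | h
  · obtain ⟨k, hk⟩ : ∃ k, (i : ℕ) = (j : ℕ) + k := ⟨(i : ℕ) - (j : ℕ), by omega⟩
    have e1 : (2 * (i : ℤ) + 1 - 2 * (j : ℤ)).natAbs = 2 * k + 1 := by omega
    have e2 : 2 * (((i : ℕ) : ℤ) - (j : ℤ)).natAbs = 2 * k := by omega
    have e3 : 2 * ((((i : ℕ) + 1 : ℕ) : ℤ) - (j : ℤ)).natAbs = 2 * k + 2 := by omega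
    rw [e1, e2, e3]
    field_simp
    ring
  · obtain ⟨k, hk⟩ : ∃ k, (j : ℕ) = (i : ℕ) + k + 1 := ⟨(j : ℕ) - (i : ℕ) - 1, by omega⟩
    have e1 : (2 * (i : ℤ) + 1 - 2 * (j : ℤ)).natAbs = 2 * k + 1 := by omega
    have e2 : 2 * (((i : ℕ) : ℤ) - (j : ℤ)).natAbs = 2 * k + 2 := by omega
    have e3 : 2 * ((((i : ℕ) + 1 : ℕ) : ℤ) - (j : ℤ)).natAbs = 2 * k := by omega
    rw [e1, e2, e3]
    field_simp
    ring

/-- The conditional covariance of the Gaussian process mechanism: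
`K₁₁ − (q/(1+q²))·(M·K₁₀ᵀ) = ((1−q²)/(1+q²))·I`; equivalently, when `K₀₀` is invertible,
the Schur complement satisfies `K₁₁ − K₁₀K₀₀⁻¹K₁₀ᵀ = ((1−q²)/(1+q²))·I`. -/
theorem gp_conditional_covariance_matrix (q : ℝ) (n : ℕ) (hn : 1 ≤ n) :
    K11 q n - (q / (1 + q ^ 2)) • (Mbid n * (K10 q n).transpose)
        = ((1 - q ^ 2) / (1 + q ^ 2)) • (1 : Matrix (Fin n) (Fin n) ℝ) ∧
      (IsUnit (K00 q n).det →
        K11 q n - K10 q n * (K00 q n)⁻¹ * (K10 q n).transpose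
          = ((1 - q ^ 2) / (1 + q ^ 2)) • (1 : Matrix (Fin n) (Fin n) ℝ)) := by
  refine ⟨part1 q n, fun hdet => ?_⟩
  have h2 : K10 q n * (K00 q n)⁻¹ = (q / (1 + q ^ 2)) • Mbid n := by
    rw [K10_eq q n, Matrix.smul_mul, Matrix.mul_assoc,
      Matrix.mul_nonsing_inv _ hdet, Matrix.mul_one]
  rw [h2, Matrix.smul_mul]
  exact part1 q n
end

section
/- Let (Ω, ℱ, μ) be a probability space, b ≥ 0, c ≥ 0, and Y : Ω → ℝ a random variable with |Y| ≤ b μ-almost everywhere. Let w⁺, w⁻ : [0,1] → [0,1] be nondecreasing with w⁺(0) = w⁻(0) = 0 and w⁺(1) = w⁻(1) = 1, and define ρ(X) := ∫₀^∞ w⁺(μ{X > z}) dz − ∫₀^∞ w⁻(μ{X < −z}) dz for bounded random variables X. Then 0 ≤ ρ(Y + c) − ρ(Y) ≤ 2c. -/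
/-!
Both halves of `ρ` are integrals over `z > 0` of a tail `z ↦ w(μ{X > z})` (for the negative half,
of `-X`), and the shift `X ↦ X + c` translates these tails by `c` and by `-c` respectively.
So `ρ(Y + c) - ρ(Y)` is the integral of `w⁺(μ{Y > z})` over `(-c, 0]` plus that of
`w⁻(μ{-Y > z})` over `(0, c]`. Both integrands take values in `[0, 1]`, which gives the bounds
`0` and `c + c`; boundedness of `Y` makes the tails vanish for `z ≥ b`, so all integrals are finite.
-/

open MeasureTheory

/-- The CPT-value with identity utilities:
`ρ(X) := ∫₀^∞ w⁺(μ{X > z}) dz − ∫₀^∞ w⁻(μ{X < −z}) dz`. -/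
noncomputable def cptId {Ω : Type*} [MeasurableSpace Ω] (μ : Measure Ω)
    (wPos wNeg : ℝ → ℝ) (X : Ω → ℝ) : ℝ :=
  (∫ z in Set.Ioi (0 : ℝ), wPos ((μ {ω | z < X ω}).toReal)) -
    ∫ z in Set.Ioi (0 : ℝ), wNeg ((μ {ω | X ω < -z}).toReal)

open Set

section RealLine

variable {G : ℝ → ℝ}

theorem setIntegral_Ioi_comp_sub {E : Type*} [NormedAddCommGroup E] [NormedSpace ℝ E]
    (f : ℝ → E) (a c : ℝ) : ∫ z in Ioi a, f (z - c) = ∫ z in Ioi (a - c), f z := by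
  have h := (measurePreserving_sub_right volume c).setIntegral_preimage_emb
    (measurableEmbedding_subRight c) f (Ioi (a - c))
  rwa [preimage_sub_const_Ioi, sub_add_cancel] at h

theorem Antitone.integrableOn_Ioi_of_eq_zero (hG : Antitone G) {b : ℝ}
    (hzero : ∀ z, b ≤ z → G z = 0) (a : ℝ) : IntegrableOn G (Ioi a) := by
  have hcompact : IntegrableOn G (Ioc a (max a b)) :=
    (hG.locallyIntegrable.integrableOn_isCompact isCompact_Icc).mono_set Ioc_subset_Icc_self
  have htail : IntegrableOn G (Ioi (max a b)) :=
    integrableOn_zero.congr_fun (fun z hz => (hzero z (le_max_right a b |>.trans hz.le)).symm)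
      measurableSet_Ioi
  rw [← Ioc_union_Ioi_eq_Ioi (le_max_left a b)]
  exact hcompact.union htail

theorem Antitone.setIntegral_Ioi_sub_Ioi_mem_Icc (hG : Antitone G) (h01 : ∀ z, G z ∈ Icc 0 1)
    {b : ℝ} (hzero : ∀ z, b ≤ z → G z = 0) {s t : ℝ} (hst : s ≤ t) :
    (∫ z in Ioi s, G z) - ∫ z in Ioi t, G z ∈ Icc 0 (t - s) := by
  rw [intervalIntegral.integral_Ioi_sub_Ioi (hG.integrableOn_Ioi_of_eq_zero hzero s) hst]
  refine ⟨intervalIntegral.integral_nonneg hst fun z _ => (h01 z).1, ?_⟩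
  calc ∫ z in s..t, G z ≤ ∫ _ in s..t, (1 : ℝ) :=
        intervalIntegral.integral_mono_on hst hG.intervalIntegrable intervalIntegrable_const
          fun z _ => (h01 z).2
    _ = t - s := by simp

end RealLine

section WeightedTail

variable {Ω : Type*} [MeasurableSpace Ω]

noncomputable def weightedTail (μ : Measure Ω) (w : ℝ → ℝ) (X : Ω → ℝ) (z : ℝ) : ℝ :=
  w (μ.real {ω | z < X ω})

variable {μ : Measure Ω} {w : ℝ → ℝ} {X : Ω → ℝ}

theorem weightedTail_add_const (a z : ℝ) :
    weightedTail μ w (fun ω => X ω + a) z = weightedTail μ w X (z - a) := by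
  simp only [weightedTail, sub_lt_iff_lt_add]

theorem weightedTail_eq_zero_of_le (hw0 : w 0 = 0) {b z : ℝ}
    (hX : ∀ᵐ ω ∂μ, X ω ≤ b) (hz : b ≤ z) : weightedTail μ w X z = 0 := by
  have hnull : μ {ω | z < X ω} = 0 :=
    measure_mono_null (fun ω hω => not_le.mpr (hz.trans_lt hω)) (ae_iff.mp hX)
  rw [weightedTail, measureReal_def, hnull, ENNReal.toReal_zero, hw0]

variable [IsZeroOrProbabilityMeasure μ]

theorem weightedTail_mem_Icc (hw : MonotoneOn w (Icc 0 1)) (hw0 : w 0 = 0) (hw1 : w 1 = 1)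
    (z : ℝ) : weightedTail μ w X z ∈ Icc 0 1 := by
  have hmem : μ.real {ω | z < X ω} ∈ Icc (0 : ℝ) 1 := ⟨measureReal_nonneg, measureReal_le_one⟩
  exact ⟨hw0 ▸ hw (left_mem_Icc.mpr zero_le_one) hmem hmem.1,
    hw1 ▸ hw hmem (right_mem_Icc.mpr zero_le_one) hmem.2⟩

theorem antitone_weightedTail (hw : MonotoneOn w (Icc 0 1)) : Antitone (weightedTail μ w X) :=
  fun _ _ hzz' => hw ⟨measureReal_nonneg, measureReal_le_one⟩
    ⟨measureReal_nonneg, measureReal_le_one⟩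
    (measureReal_mono fun _ hω => hzz'.trans_lt hω)

theorem setIntegral_Ioi_sub_Ioi_weightedTail_mem_Icc (hw : MonotoneOn w (Icc 0 1)) (hw0 : w 0 = 0)
    (hw1 : w 1 = 1) {b : ℝ} (hX : ∀ᵐ ω ∂μ, X ω ≤ b) {s t : ℝ} (hst : s ≤ t) :
    (∫ z in Ioi s, weightedTail μ w X z) - ∫ z in Ioi t, weightedTail μ w X z ∈ Icc 0 (t - s) :=
  (antitone_weightedTail hw).setIntegral_Ioi_sub_Ioi_mem_Icc (weightedTail_mem_Icc hw hw0 hw1)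
    (fun _ => weightedTail_eq_zero_of_le hw0 hX) hst

end WeightedTail

section CPTValue

variable {Ω : Type*} [MeasurableSpace Ω] (μ : Measure Ω) (wPos wNeg : ℝ → ℝ) (X : Ω → ℝ)

theorem cptId_eq_weightedTail :
    cptId μ wPos wNeg X =
      (∫ z in Ioi 0, weightedTail μ wPos X z) -
        ∫ z in Ioi 0, weightedTail μ wNeg (fun ω => -X ω) z := by
  simp only [cptId, weightedTail, measureReal_def, lt_neg]

theorem cptId_add_const (a : ℝ) :
    cptId μ wPos wNeg (fun ω => X ω + a) =
      (∫ z in Ioi (-a), weightedTail μ wPos X z) -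
        ∫ z in Ioi a, weightedTail μ wNeg (fun ω => -X ω) z := by
  have hneg : (fun ω => -(X ω + a)) = fun ω => -X ω + -a := by
    funext ω; ring
  simp only [cptId_eq_weightedTail, hneg, weightedTail_add_const, setIntegral_Ioi_comp_sub,
    zero_sub, neg_neg]

end CPTValue

theorem cptId_shift_estimate_general {Ω : Type*} [MeasurableSpace Ω] (μ : Measure Ω)
    [IsProbabilityMeasure μ]
    (b c : ℝ) (hc : 0 ≤ c)
    (Y : Ω → ℝ) (hY : ∀ᵐ ω ∂μ, |Y ω| ≤ b)
    (wPos wNeg : ℝ → ℝ)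
    (hwPosMono : MonotoneOn wPos (Set.Icc 0 1)) (hwPos0 : wPos 0 = 0) (hwPos1 : wPos 1 = 1)
    (hwNegMono : MonotoneOn wNeg (Set.Icc 0 1)) (hwNeg0 : wNeg 0 = 0) (hwNeg1 : wNeg 1 = 1) :
    0 ≤ cptId μ wPos wNeg (fun ω => Y ω + c) - cptId μ wPos wNeg Y ∧
      cptId μ wPos wNeg (fun ω => Y ω + c) - cptId μ wPos wNeg Y ≤ 2 * c := by
  have hPos := setIntegral_Ioi_sub_Ioi_weightedTail_mem_Icc hwPosMono hwPos0 hwPos1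
    (hY.mono fun _ h => (abs_le.mp h).2) (neg_nonpos.mpr hc)
  have hNeg := setIntegral_Ioi_sub_Ioi_weightedTail_mem_Icc hwNegMono hwNeg0 hwNeg1
    (hY.mono fun _ h => neg_le.mp (abs_le.mp h).1) hc
  rw [cptId_add_const, cptId_eq_weightedTail]
  constructor <;> linarith [hPos.1, hPos.2, hNeg.1, hNeg.2]

/-- Shift estimate: for a bounded random variable `Y` and `c ≥ 0`,
`0 ≤ ρ(Y + c) − ρ(Y) ≤ 2c`. -/
theorem cptId_shift_estimate {Ω : Type*} [MeasurableSpace Ω] (μ : Measure Ω)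
    [IsProbabilityMeasure μ]
    (b c : ℝ) (hb : 0 ≤ b) (hc : 0 ≤ c)
    (Y : Ω → ℝ) (hY : ∀ᵐ ω ∂μ, |Y ω| ≤ b)
    (wPos wNeg : ℝ → ℝ)
    (hwPosMono : MonotoneOn wPos (Set.Icc 0 1)) (hwPos0 : wPos 0 = 0) (hwPos1 : wPos 1 = 1)
    (hwNegMono : MonotoneOn wNeg (Set.Icc 0 1)) (hwNeg0 : wNeg 0 = 0) (hwNeg1 : wNeg 1 = 1) :
    0 ≤ cptId μ wPos wNeg (fun ω => Y ω + c) - cptId μ wPos wNeg Y ∧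
      cptId μ wPos wNeg (fun ω => Y ω + c) - cptId μ wPos wNeg Y ≤ 2 * c :=
  cptId_shift_estimate_general μ b c hc Y hY wPos wNeg hwPosMono hwPos0 hwPos1 hwNegMono hwNeg0
    hwNeg1
end

section
/- Let S and A be nonempty finite types, γ ∈ [0,1), and let w : [0,1] → [0,1] be nondecreasing with w(0) = 0 and w(1) = 1. Let P : S → A → S → ℝ satisfy P s a s' ≥ 0 and ∑_{s'} P s a s' = 1 for all s, a; let π : S → A → ℝ satisfy π s a ≥ 0 and ∑_a π s a = 1 for all s; and let r : S → A → ℝ satisfy r s a ≥ 0. For Q : S → A → ℝ with Q ≥ 0 define (T Q)(s,a) := ∫₀^∞ w( ∑_{s' : r s a + γ·∑_{a'} π s' a' · Q s' a' > z} P s a s' ) dz. Then for all Q¹, Q² : S → A → ℝ with Q¹ ≥ 0 and Q² ≥ 0, and all c ≥ 0 such that |Q¹ s a − Q² s a| ≤ c for all (s,a), one has |(T Q¹)(s,a) − (T Q²)(s,a)| ≤ γ·c for all (s,a). -/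
open MeasureTheory Classical

/-- The CPT-Q-iteration operator with identity utility and distortion `w`:
`(T Q)(s,a) := ∫₀^∞ w( ∑_{s' : r s a + γ·V_Q(s') > z} P s a s' ) dz`,
where `V_Q(s') := ∑_{a'} π s' a' * Q s' a'`. -/
noncomputable def cptT {S A : Type*} [Fintype S] [Fintype A]
    (γ : ℝ) (w : ℝ → ℝ) (P : S → A → S → ℝ) (π : S → A → ℝ) (r : S → A → ℝ)
    (Q : S → A → ℝ) (s : S) (a : A) : ℝ :=
  ∫ z in Set.Ioi (0 : ℝ),
    w (∑ s' : S, if z < r s a + γ * ∑ a' : A, π s' a' * Q s' a' then P s a s' else 0)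

/-- Integral over `Ioi 0` of a function vanishing on `[M, ∞)` is an interval integral. -/
lemma cpt_aux_tail (g : ℝ → ℝ) (M : ℝ) (hM0 : 0 ≤ M)
    (hM : ∀ z, M ≤ z → g z = 0) :
    ∫ z in Set.Ioi (0 : ℝ), g z = ∫ z in (0:ℝ)..M, g z := by
  have h1 : Set.EqOn g ((Set.Ioc (0:ℝ) M).indicator g) (Set.Ioi 0) := by
    intro z hz
    by_cases h : z ≤ M
    · rw [Set.indicator_of_mem (Set.mem_Ioc.2 ⟨hz, h⟩)]
    · rw [Set.indicator_of_notMem (fun hmem => h hmem.2), hM z (le_of_lt (not_le.1 h))]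
  rw [setIntegral_congr_fun measurableSet_Ioi h1, setIntegral_indicator measurableSet_Ioc,
    Set.inter_eq_self_of_subset_right (Set.Ioc_subset_Ioi_self),
    intervalIntegral.integral_of_le hM0]

/-- One-sided contraction bound for antitone `[0,1]`-valued functions with bounded support. -/
lemma cpt_aux_contract (g₁ g₂ : ℝ → ℝ) (hg₁ : Antitone g₁) (hg₂ : Antitone g₂)
    (_h01 : ∀ z, 0 ≤ g₁ z) (h11 : ∀ z, g₁ z ≤ 1)
    (M : ℝ) (hM0 : 0 ≤ M) (hM1 : ∀ z, M ≤ z → g₁ z = 0) (hM2 : ∀ z, M ≤ z → g₂ z = 0)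
    (d : ℝ) (hd : 0 ≤ d) (hle : ∀ z, g₁ (z + d) ≤ g₂ z) :
    (∫ z in Set.Ioi (0:ℝ), g₁ z) - (∫ z in Set.Ioi (0:ℝ), g₂ z) ≤ d := by
  rw [cpt_aux_tail g₁ M hM0 hM1, cpt_aux_tail g₂ M hM0 hM2]
  have hint : ∀ a b : ℝ, IntervalIntegrable g₁ volume a b := fun a b =>
    hg₁.intervalIntegrable
  have hshift : Antitone (fun z => g₁ (z + d)) := fun x y hxy =>
    hg₁ (by linarith)
  -- ∫₀^M g₁(z+d) ≤ ∫₀^M g₂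
  have step1 : (∫ z in (0:ℝ)..M, g₁ (z + d)) ≤ ∫ z in (0:ℝ)..M, g₂ z := by
    apply intervalIntegral.integral_mono_on hM0 hshift.intervalIntegrable
      hg₂.intervalIntegrable
    intro x _
    exact hle x
  -- ∫₀^M g₁(z+d) = ∫_d^{M+d} g₁ = ∫₀^{M+d} g₁ - ∫₀^d g₁
  have step2 : (∫ z in (0:ℝ)..M, g₁ (z + d)) = (∫ z in (0:ℝ)..(M+d), g₁ z) - ∫ z in (0:ℝ)..d, g₁ z := by
    rw [intervalIntegral.integral_comp_add_right g₁ d, zero_add]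
    have := intervalIntegral.integral_add_adjacent_intervals (a := (0:ℝ)) (b := d)
      (c := M + d) (f := g₁) (μ := volume) (hint 0 d) (hint d (M+d))
    linarith
  -- ∫₀^{M+d} g₁ = ∫₀^M g₁  (tail vanishes)
  have step3 : (∫ z in (0:ℝ)..(M+d), g₁ z) = ∫ z in (0:ℝ)..M, g₁ z := by
    have := intervalIntegral.integral_add_adjacent_intervals (a := (0:ℝ)) (b := M)
      (c := M + d) (f := g₁) (μ := volume) (hint 0 M) (hint M (M+d))
    have hz : (∫ z in M..(M+d), g₁ z) = 0 := by
      rw [intervalIntegral.integral_of_le (by linarith)]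
      rw [setIntegral_congr_fun measurableSet_Ioc
        (fun z hz => hM1 z (le_of_lt hz.1))]
      simp
    linarith
  -- ∫₀^d g₁ ≤ d
  have step4 : (∫ z in (0:ℝ)..d, g₁ z) ≤ d := by
    calc (∫ z in (0:ℝ)..d, g₁ z) ≤ ∫ _ in (0:ℝ)..d, (1:ℝ) :=
          intervalIntegral.integral_mono_on hd (hint 0 d)
            intervalIntegrable_const (fun x _ => h11 x)
      _ = d := by simp
  linarith

/-- Contraction property of the CPT-Q-iteration operator: if `|Q¹ − Q²| ≤ c` pointwise,
then `|(T Q¹)(s,a) − (T Q²)(s,a)| ≤ γ·c` for all `(s,a)`. -/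
theorem cptT_contraction {S A : Type*} [Fintype S] [Fintype A] [Nonempty S] [Nonempty A]
    (γ : ℝ) (hγ : γ ∈ Set.Ico (0 : ℝ) 1)
    (w : ℝ → ℝ) (hwMono : MonotoneOn w (Set.Icc 0 1)) (hw0 : w 0 = 0) (hw1 : w 1 = 1)
    (P : S → A → S → ℝ) (hP0 : ∀ s a s', 0 ≤ P s a s') (hP1 : ∀ s a, ∑ s', P s a s' = 1)
    (π : S → A → ℝ) (hπ0 : ∀ s a, 0 ≤ π s a) (hπ1 : ∀ s, ∑ a, π s a = 1)
    (r : S → A → ℝ) (hr : ∀ s a, 0 ≤ r s a)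
    (Q₁ Q₂ : S → A → ℝ) (hQ₁ : ∀ s a, 0 ≤ Q₁ s a) (hQ₂ : ∀ s a, 0 ≤ Q₂ s a)
    (c : ℝ) (hc : 0 ≤ c) (hQ : ∀ s a, |Q₁ s a - Q₂ s a| ≤ c) :
    ∀ s a, |cptT γ w P π r Q₁ s a - cptT γ w P π r Q₂ s a| ≤ γ * c := by
  obtain ⟨hγ0, hγ1⟩ := hγ
  intro s a
  -- thresholds
  set θ₁ : S → ℝ := fun s' => r s a + γ * ∑ a', π s' a' * Q₁ s' a' with hθ₁
  set θ₂ : S → ℝ := fun s' => r s a + γ * ∑ a', π s' a' * Q₂ s' a' with hθ₂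
  -- value bounds: |V₁ - V₂| ≤ c
  have hVd : ∀ s', |(∑ a', π s' a' * Q₁ s' a') - ∑ a', π s' a' * Q₂ s' a'| ≤ c := by
    intro s'
    rw [← Finset.sum_sub_distrib]
    calc |∑ a', (π s' a' * Q₁ s' a' - π s' a' * Q₂ s' a')|
        ≤ ∑ a', |π s' a' * Q₁ s' a' - π s' a' * Q₂ s' a'| :=
          Finset.abs_sum_le_sum_abs _ _
      _ = ∑ a', π s' a' * |Q₁ s' a' - Q₂ s' a'| := by
          refine Finset.sum_congr rfl fun a' _ => ?_
          rw [← mul_sub, abs_mul, abs_of_nonneg (hπ0 s' a')]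
      _ ≤ ∑ a', π s' a' * c :=
          Finset.sum_le_sum fun a' _ => mul_le_mul_of_nonneg_left (hQ s' a') (hπ0 s' a')
      _ = c := by rw [← Finset.sum_mul, hπ1 s', one_mul]
  have hθd₁ : ∀ s', θ₁ s' ≤ θ₂ s' + γ * c := by
    intro s'
    have h := (abs_le.1 (hVd s')).2
    simp only [hθ₁, hθ₂]
    nlinarith [mul_le_mul_of_nonneg_left h hγ0]
  have hθd₂ : ∀ s', θ₂ s' ≤ θ₁ s' + γ * c := by
    intro s'
    have h := (abs_le.1 (hVd s')).1
    simp only [hθ₁, hθ₂]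
    nlinarith [mul_le_mul_of_nonneg_left h hγ0]
  -- the integrands
  set F : (S → ℝ) → ℝ → ℝ := fun θ z => ∑ s', if z < θ s' then P s a s' else 0 with hF
  have hF01 : ∀ θ z, 0 ≤ F θ z ∧ F θ z ≤ 1 := by
    intro θ z
    constructor
    · exact Finset.sum_nonneg fun s' _ => by
        by_cases h : z < θ s' <;> simp [h, hP0 s a s']
    · rw [← hP1 s a]
      exact Finset.sum_le_sum fun s' _ => by
        by_cases h : z < θ s' <;> simp [h, hP0 s a s']
  have hFanti : ∀ θ, Antitone (F θ) := by
    intro θ x y hxy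
    refine Finset.sum_le_sum fun s' _ => ?_
    by_cases h : y < θ s'
    · simp [h, lt_of_le_of_lt hxy h]
    · by_cases h' : x < θ s' <;> simp [h, h', hP0 s a s']
  set g₁ : ℝ → ℝ := fun z => w (F θ₁ z) with hg₁def
  set g₂ : ℝ → ℝ := fun z => w (F θ₂ z) with hg₂def
  have hmemIcc : ∀ θ z, F θ z ∈ Set.Icc (0:ℝ) 1 := fun θ z => ⟨(hF01 θ z).1, (hF01 θ z).2⟩
  have hganti : ∀ θ, Antitone (fun z => w (F θ z)) := by
    intro θ x y hxy
    exact hwMono (hmemIcc θ y) (hmemIcc θ x) (hFanti θ hxy)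
  have hg0 : ∀ θ z, 0 ≤ w (F θ z) := by
    intro θ z
    rw [← hw0]
    exact hwMono (Set.left_mem_Icc.2 zero_le_one) (hmemIcc θ z) (hF01 θ z).1
  have hg1 : ∀ θ z, w (F θ z) ≤ 1 := by
    intro θ z
    rw [← hw1]
    exact hwMono (hmemIcc θ z) (Set.right_mem_Icc.2 zero_le_one) (hF01 θ z).2
  -- common bound M for thresholds
  set M : ℝ := max (Finset.univ.sup' Finset.univ_nonempty (fun s' => max (θ₁ s') (θ₂ s'))) 0
    with hMdef
  have hM0 : 0 ≤ M := le_max_right _ _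
  have hsup : ∀ s', max (θ₁ s') (θ₂ s') ≤ M := fun s' =>
    le_trans (Finset.le_sup' (fun s' => max (θ₁ s') (θ₂ s')) (Finset.mem_univ s'))
      (le_max_left _ _)
  have hMθ₁ : ∀ s', θ₁ s' ≤ M := fun s' => le_trans (le_max_left _ _) (hsup s')
  have hMθ₂ : ∀ s', θ₂ s' ≤ M := fun s' => le_trans (le_max_right _ _) (hsup s')
  have hFzero : ∀ θ, (∀ s', θ s' ≤ M) → ∀ z, M ≤ z → w (F θ z) = 0 := by
    intro θ hθ z hz
    have : F θ z = 0 := by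
      apply Finset.sum_eq_zero
      intro s' _
      have : ¬ z < θ s' := not_lt.2 (le_trans (hθ s') hz)
      simp [this]
    rw [this, hw0]
  -- the shift inequalities
  have hshift : ∀ (θ θ' : S → ℝ), (∀ s', θ s' ≤ θ' s' + γ * c) →
      ∀ z, w (F θ (z + γ * c)) ≤ w (F θ' z) := by
    intro θ θ' hθθ z
    refine hwMono (hmemIcc θ _) (hmemIcc θ' z) ?_
    refine Finset.sum_le_sum fun s' _ => ?_
    by_cases h : z + γ * c < θ s'
    · have : z < θ' s' := by linarith [hθθ s']
      simp [h, this]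
    · by_cases h' : z < θ' s' <;> simp [h, h', hP0 s a s']
  -- unfold cptT
  have e₁ : cptT γ w P π r Q₁ s a = ∫ z in Set.Ioi (0:ℝ), g₁ z := rfl
  have e₂ : cptT γ w P π r Q₂ s a = ∫ z in Set.Ioi (0:ℝ), g₂ z := rfl
  rw [e₁, e₂, abs_sub_le_iff]
  have hγc : 0 ≤ γ * c := mul_nonneg hγ0 hc
  constructor
  · exact cpt_aux_contract g₁ g₂ (hganti θ₁) (hganti θ₂) (hg0 θ₁) (hg1 θ₁)
      M hM0 (hFzero θ₁ hMθ₁) (hFzero θ₂ hMθ₂) (γ * c) hγc (hshift θ₁ θ₂ hθd₁)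
  · exact cpt_aux_contract g₂ g₁ (hganti θ₂) (hganti θ₁) (hg0 θ₂) (hg1 θ₂)
      M hM0 (hFzero θ₂ hMθ₂) (hFzero θ₁ hMθ₁) (γ * c) hγc (hshift θ₂ θ₁ hθd₂)
end

section
/- Let S and A be nonempty finite types, γ ≥ 0. Let u⁺, u⁻ : ℝ → ℝ₊ with u⁺(x) = 0 for x ≤ 0 and u⁺ nondecreasing, u⁻(x) = 0 for x ≥ 0 and u⁻ nonincreasing, and let w⁺, w⁻ : [0,1] → [0,1] be nondecreasing with w⁺(0) = w⁻(0) = 0 and w⁺(1) = w⁻(1) = 1. Let P : S → A → S → ℝ satisfy P s a s' ≥ 0 and ∑_{s'} P s a s' = 1; let π : S → A → ℝ satisfy π s a ≥ 0 and ∑_a π s a = 1; and let r : S → A → ℝ. For Q : S → A → ℝ define (T_π Q)(s,a) as the CPT-value, under the probability distribution s' ↦ P s a s' on S, of the function g(s') := r s a + γ·∑_{a'} π s' a' · Q s' a': (T_π Q)(s,a) := ∫₀^∞ w⁺( ∑_{s' : u⁺(g s') > z} P s a s' ) dz − ∫₀^∞ w⁻( ∑_{s' : u⁻(g s') > z} P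 s a s' ) dz. If Q¹ s a ≤ Q² s a for all (s,a), then (T_π Q¹)(s,a) ≤ (T_π Q²)(s,a) for all (s,a). -/
/-! The target `r + γ·∑ π Q` is monotone in `Q`. Since `u⁺` is nondecreasing and `u⁻`
nonincreasing, raising the target raises every tail probability `p {u⁺ ∘ X > z}` and lowers every
`p {u⁻ ∘ X > z}`; the weights `w±` preserve these inequalities, and integrating over `z > 0` gives
the claim. The integrals exist because each weighted tail is antitone in `z` and vanishes once
`z ≥ max X`. -/

open MeasureTheory Classical

/-- The CPT-Q-iteration operator `(T_π Q)(s,a)`: the CPT-value, under the probability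
distribution `s' ↦ P s a s'` on `S`, of `g(s') := r s a + γ·∑_{a'} π s' a' · Q s' a'`. -/
noncomputable def cptTpi {S A : Type*} [Fintype S] [Fintype A]
    (γ : ℝ) (uPos uNeg wPos wNeg : ℝ → ℝ)
    (P : S → A → S → ℝ) (π : S → A → ℝ) (r : S → A → ℝ)
    (Q : S → A → ℝ) (s : S) (a : A) : ℝ :=
  (∫ z in Set.Ioi (0 : ℝ),
      wPos (∑ s' : S,
        if z < uPos (r s a + γ * ∑ a' : A, π s' a' * Q s' a') then P s a s' else 0)) -
    ∫ z in Set.Ioi (0 : ℝ),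
      wNeg (∑ s' : S,
        if z < uNeg (r s a + γ * ∑ a' : A, π s' a' * Q s' a') then P s a s' else 0)

namespace CPT

variable {S : Type*} [Fintype S]

noncomputable def upperTail (p X : S → ℝ) (z : ℝ) : ℝ :=
  ∑ s ∈ Finset.univ.filter (fun s => z < X s), p s

/-- The CPT-value `ρ_cpt(X)` of `X` under the probability vector `p`. -/
noncomputable def value (uPos uNeg wPos wNeg : ℝ → ℝ) (p X : S → ℝ) : ℝ :=
  (∫ z in Set.Ioi (0 : ℝ), wPos (upperTail p (uPos ∘ X) z)) -
    ∫ z in Set.Ioi (0 : ℝ), wNeg (upperTail p (uNeg ∘ X) z)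

theorem upperTail_le_upperTail {p : S → ℝ} (hp0 : ∀ s, 0 ≤ p s) {X Y : S → ℝ} {y z : ℝ}
    (hXY : X ≤ Y) (hyz : y ≤ z) : upperTail p X z ≤ upperTail p Y y :=
  Finset.sum_le_sum_of_subset_of_nonneg
    (Finset.monotone_filter_right _ fun s _ hs => hyz.trans_lt (hs.trans_le (hXY s)))
    fun s _ _ => hp0 s

theorem upperTail_antitone {p : S → ℝ} (hp0 : ∀ s, 0 ≤ p s) (X : S → ℝ) :
    Antitone (upperTail p X) :=
  fun _ _ => upperTail_le_upperTail hp0 le_rfl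

theorem upperTail_mem_Icc {p : S → ℝ} (hp0 : ∀ s, 0 ≤ p s) (hp1 : ∑ s, p s = 1)
    (X : S → ℝ) (z : ℝ) : upperTail p X z ∈ Set.Icc 0 1 :=
  ⟨Finset.sum_nonneg fun s _ => hp0 s,
    hp1 ▸ Finset.sum_le_sum_of_subset_of_nonneg (Finset.filter_subset _ _) fun s _ _ => hp0 s⟩

theorem upperTail_eq_zero {p X : S → ℝ} {z : ℝ} (hz : ∀ s, X s ≤ z) : upperTail p X z = 0 := by
  simp [upperTail, Finset.filter_eq_empty_iff.mpr fun s _ => (hz s).not_gt]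

section weighted

variable {p : S → ℝ} {w : ℝ → ℝ}

theorem integrableOn_comp_upperTail (hp0 : ∀ s, 0 ≤ p s) (hp1 : ∑ s, p s = 1)
    (hw : MonotoneOn w (Set.Icc 0 1)) (hw0 : w 0 = 0) (X : S → ℝ) :
    IntegrableOn (fun z => w (upperTail p X z)) (Set.Ioi 0) := by
  have hanti : Antitone fun z => w (upperTail p X z) := fun y z hyz =>
    hw (upperTail_mem_Icc hp0 hp1 X z) (upperTail_mem_Icc hp0 hp1 X y)
      (upperTail_antitone hp0 X hyz)
  obtain ⟨M, hM⟩ := Finite.bddAbove_range X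
  have hzero : Set.EqOn 0 (fun z => w (upperTail p X z)) (Set.Ioi M) := fun z hz => by
    simp only [Pi.zero_apply, upperTail_eq_zero fun s => (hM ⟨s, rfl⟩).trans hz.le, hw0]
  have hbody : IntegrableOn (fun z => w (upperTail p X z)) (Set.Icc 0 M) :=
    hanti.locallyIntegrable.integrableOn_isCompact isCompact_Icc
  have htail : IntegrableOn (fun z => w (upperTail p X z)) (Set.Ioi M) :=
    integrableOn_zero.congr_fun hzero measurableSet_Ioi
  refine (hbody.union htail).mono_set fun z (hz : 0 < z) => ?_
  exact (le_or_gt z M).imp (fun hzM => ⟨hz.le, hzM⟩) id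

theorem setIntegral_comp_upperTail_mono (hp0 : ∀ s, 0 ≤ p s) (hp1 : ∑ s, p s = 1)
    (hw : MonotoneOn w (Set.Icc 0 1)) (hw0 : w 0 = 0) {X Y : S → ℝ} (hXY : X ≤ Y) :
    ∫ z in Set.Ioi 0, w (upperTail p X z) ≤ ∫ z in Set.Ioi 0, w (upperTail p Y z) :=
  setIntegral_mono_on (integrableOn_comp_upperTail hp0 hp1 hw hw0 X)
    (integrableOn_comp_upperTail hp0 hp1 hw hw0 Y) measurableSet_Ioi fun z _ =>
      hw (upperTail_mem_Icc hp0 hp1 X z) (upperTail_mem_Icc hp0 hp1 Y z)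
        (upperTail_le_upperTail hp0 hXY le_rfl)

end weighted

theorem value_mono {uPos uNeg wPos wNeg : ℝ → ℝ} (huPos : Monotone uPos) (huNeg : Antitone uNeg)
    (hwPos : MonotoneOn wPos (Set.Icc 0 1)) (hwPos0 : wPos 0 = 0)
    (hwNeg : MonotoneOn wNeg (Set.Icc 0 1)) (hwNeg0 : wNeg 0 = 0)
    {p : S → ℝ} (hp0 : ∀ s, 0 ≤ p s) (hp1 : ∑ s, p s = 1) {X Y : S → ℝ} (hXY : X ≤ Y) :
    value uPos uNeg wPos wNeg p X ≤ value uPos uNeg wPos wNeg p Y :=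
  sub_le_sub
    (setIntegral_comp_upperTail_mono hp0 hp1 hwPos hwPos0 fun s => huPos (hXY s))
    (setIntegral_comp_upperTail_mono hp0 hp1 hwNeg hwNeg0 fun s => huNeg (hXY s))

end CPT

theorem cptTpi_eq_value {S A : Type*} [Fintype S] [Fintype A]
    (γ : ℝ) (uPos uNeg wPos wNeg : ℝ → ℝ)
    (P : S → A → S → ℝ) (π : S → A → ℝ) (r : S → A → ℝ) (Q : S → A → ℝ) (s : S) (a : A) :
    cptTpi γ uPos uNeg wPos wNeg P π r Q s a =
      CPT.value uPos uNeg wPos wNeg (P s a) fun s' => r s a + γ * ∑ a', π s' a' * Q s' a' := by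
  simp only [cptTpi, CPT.value, CPT.upperTail, Finset.sum_filter, Function.comp_apply]

theorem cptTpi_mono_general {S A : Type*} [Fintype S] [Fintype A]
    (γ : ℝ) (hγ : 0 ≤ γ)
    (uPos uNeg wPos wNeg : ℝ → ℝ)
    (huPosMono : Monotone uPos)
    (huNegAnti : Antitone uNeg)
    (hwPosMono : MonotoneOn wPos (Set.Icc 0 1)) (hwPos0 : wPos 0 = 0)
    (hwNegMono : MonotoneOn wNeg (Set.Icc 0 1)) (hwNeg0 : wNeg 0 = 0)
    (P : S → A → S → ℝ) (hP0 : ∀ s a s', 0 ≤ P s a s') (hP1 : ∀ s a, ∑ s', P s a s' = 1)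
    (π : S → A → ℝ) (hπ0 : ∀ s a, 0 ≤ π s a)
    (r : S → A → ℝ)
    (Q₁ Q₂ : S → A → ℝ) (hQ : ∀ s a, Q₁ s a ≤ Q₂ s a) :
    ∀ s a, cptTpi γ uPos uNeg wPos wNeg P π r Q₁ s a
            ≤ cptTpi γ uPos uNeg wPos wNeg P π r Q₂ s a := by
  intro s a
  rw [cptTpi_eq_value, cptTpi_eq_value]
  refine CPT.value_mono huPosMono huNegAnti hwPosMono hwPos0 hwNegMono hwNeg0
    (hP0 s a) (hP1 s a) fun s' => ?_
  gcongr with a' _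
  · exact hπ0 s' a'
  · exact hQ s' a'

/-- Monotonicity of the CPT-Q-iteration operator (Proposition 1): if `Q¹ ≤ Q²` pointwise,
then `(T_π Q¹)(s,a) ≤ (T_π Q²)(s,a)` for all `(s,a)`. -/
theorem cptTpi_mono {S A : Type*} [Fintype S] [Fintype A] [Nonempty S] [Nonempty A]
    (γ : ℝ) (hγ : 0 ≤ γ)
    (uPos uNeg wPos wNeg : ℝ → ℝ)
    (huPosNonneg : ∀ x, 0 ≤ uPos x) (huPosZero : ∀ x ≤ (0 : ℝ), uPos x = 0)
    (huPosMono : Monotone uPos)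
    (huNegNonneg : ∀ x, 0 ≤ uNeg x) (huNegZero : ∀ x, (0 : ℝ) ≤ x → uNeg x = 0)
    (huNegAnti : Antitone uNeg)
    (hwPosMono : MonotoneOn wPos (Set.Icc 0 1)) (hwPos0 : wPos 0 = 0) (hwPos1 : wPos 1 = 1)
    (hwNegMono : MonotoneOn wNeg (Set.Icc 0 1)) (hwNeg0 : wNeg 0 = 0) (hwNeg1 : wNeg 1 = 1)
    (P : S → A → S → ℝ) (hP0 : ∀ s a s', 0 ≤ P s a s') (hP1 : ∀ s a, ∑ s', P s a s' = 1)
    (π : S → A → ℝ) (hπ0 : ∀ s a, 0 ≤ π s a) (hπ1 : ∀ s, ∑ a, π s a = 1)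
    (r : S → A → ℝ)
    (Q₁ Q₂ : S → A → ℝ) (hQ : ∀ s a, Q₁ s a ≤ Q₂ s a) :
    ∀ s a, cptTpi γ uPos uNeg wPos wNeg P π r Q₁ s a
            ≤ cptTpi γ uPos uNeg wPos wNeg P π r Q₂ s a :=
  cptTpi_mono_general γ hγ uPos uNeg wPos wNeg huPosMono huNegAnti hwPosMono hwPos0 hwNegMono hwNeg0
    P hP0 hP1 π hπ0 r Q₁ Q₂ hQ
end
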